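/- arXiv:2203.10788 — 2 statements merged into one kernel-verified Lean document; each statement's English description precedes it below -/
import Mathlib

section
/- For d = 1, Z > 0, ω > Z²/4 and α > 0, the function φ(x) = {(α+1)ω·sech²[α√ω|x| + artanh(Z/(2√ω))]}^{1/(2α)} satisfies −φ'' + ωφ − |φ|^{2α}φ = 0 on ℝ \ {0} together with the jump condition φ'(0⁺) − φ'(0⁻) = −Z·φ(0). -/
open Set

/-- Inverse hyperbolic tangent. -/
noncomputable def artanh (x : ℝ) : ℝ := (1 / 2) * Real.log ((1 + x) / (1 - x))

lemma tanh_artanh' {t : ℝ} (h0 : -1 < t) (h1 : t < 1) : Real.tanh (artanh t) = t := by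
  have hu : (0:ℝ) < (1 + t) / (1 - t) := by apply div_pos <;> linarith
  set E := Real.exp (artanh t) with hE
  have hEpos : 0 < E := Real.exp_pos _
  have hE2 : E ^ 2 = (1 + t) / (1 - t) := by
    rw [hE, ← Real.exp_nat_mul]
    norm_num [artanh]
    rw [show (2:ℝ) * ((1/2) * Real.log ((1+t)/(1-t))) = Real.log ((1+t)/(1-t)) by ring,
      Real.exp_log hu]
  have hch : Real.cosh (artanh t) = (E + E⁻¹) / 2 := by rw [Real.cosh_eq, Real.exp_neg]
  have hsh : Real.sinh (artanh t) = (E - E⁻¹) / 2 := by rw [Real.sinh_eq, Real.exp_neg]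
  rw [Real.tanh_eq_sinh_div_cosh, hsh, hch]
  have h1t : (1:ℝ) - t ≠ 0 := by linarith
  field_simp at hE2 ⊢
  nlinarith [hE2]

lemma derivF (A b c e : ℝ) (u : ℝ) :
    HasDerivAt (fun u : ℝ => A * Real.cosh (b * u + c) ^ e)
      (A * (Real.sinh (b*u+c) * b * e * Real.cosh (b*u+c) ^ (e-1))) u := by
  have h1 : HasDerivAt (fun u : ℝ => b * u + c) b u := by
    simpa using ((hasDerivAt_id u).const_mul b).add_const c
  exact (h1.cosh.rpow_const (p := e) (Or.inl (Real.cosh_pos _).ne')).const_mul A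

lemma derivF' (A b c e : ℝ) (u : ℝ) :
    HasDerivAt (fun u : ℝ => A * (Real.sinh (b*u+c) * b * e * Real.cosh (b*u+c) ^ (e-1)))
      (A * (b * e) * ((Real.cosh (b*u+c) * b) * Real.cosh (b*u+c) ^ (e-1)
        + Real.sinh (b*u+c) * (Real.sinh (b*u+c) * b * (e-1) * Real.cosh (b*u+c) ^ (e-1-1)))) u := by
  have h1 : HasDerivAt (fun u : ℝ => b * u + c) b u := by
    simpa using ((hasDerivAt_id u).const_mul b).add_const c
  have hs := h1.sinh
  have hc := h1.cosh.rpow_const (p := e - 1) (Or.inl (Real.cosh_pos _).ne')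
  have h2 := (hs.mul hc).const_mul (A * (b * e))
  refine h2.congr_of_eventuallyEq (Filter.Eventually.of_forall fun x => ?_)
  simp only [Pi.mul_apply]
  ring

lemma alg (α w A p q r b : ℝ) (hα : α ≠ 0) (hp : p ≠ 0) (hq : q^2 = p^2 - 1)
    (hb : b^2 = α^2*w) :
    -(A * (b*(-(1/α))) * ((p*b)*(r/p) + q*(q*b*((-(1/α))-1)*(r/p/p)))) + w*(A*r)
      - ((α+1)*w*(p^2)⁻¹)*(A*r) = 0 := by
  field_simp
  linear_combination (A*r*(-α*p^3*b^2 - p^3*b^2 - α*b^2 - b^2 - α*w*p^2 - α^2*w*p^2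
      + α^2*w + α^3*w + α*b^2 + b^2 + α*w*p^2 + α^2*w*p^2 - α^2*w - α^3*w)) * hq
    + (A*r*(α*p^3 - p^5 + p^3 + α - p^2 + 1 - α + p^2 - 1)) * hb
    + (A*r*b^2*(α+1)*(p^3-1)) * hq + (A*r*(α*p^2 - α*p^5 + (α+1)*(p^3-1)*(p^2-1))) * hb

/-- The explicit ground state for the 1D attractive delta potential: it solves
the stationary NLS away from the origin and satisfies the derivative jump
condition φ'(0⁺) - φ'(0⁻) = -Z φ(0). -/
theorem stmt14 (α ω Z : ℝ) (hα : 0 < α) (hZ : 0 < Z) (hω : Z ^ 2 / 4 < ω)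
    (φ : ℝ → ℝ)
    (hφ : ∀ x, φ x =
      ((α + 1) * ω *
        (1 / Real.cosh (α * Real.sqrt ω * |x| +
          artanh (Z / (2 * Real.sqrt ω)))) ^ 2) ^ (1 / (2 * α))) :
    (∀ x : ℝ, x ≠ 0 →
      -(deriv (deriv φ)) x + ω * φ x - |φ x| ^ (2 * α) * φ x = 0) ∧
    ∃ dp dm : ℝ, HasDerivWithinAt φ dp (Ici (0 : ℝ)) 0 ∧
      HasDerivWithinAt φ dm (Iic (0 : ℝ)) 0 ∧
      dp - dm = -Z * φ 0 := by
  have hω0 : 0 < ω := lt_of_le_of_lt (by positivity) hω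
  set s := Real.sqrt ω with hsdef
  have hs : 0 < s := Real.sqrt_pos.2 hω0
  have hs2 : s ^ 2 = ω := Real.sq_sqrt hω0.le
  set c := artanh (Z / (2 * s)) with hcdef
  set e : ℝ := -(1/α) with hedef
  set A : ℝ := ((α + 1) * ω) ^ (1 / (2 * α)) with hAdef
  have hA : 0 < A := Real.rpow_pos_of_pos (by positivity) _
  -- representation of φ
  have hφF : ∀ x : ℝ, φ x = A * Real.cosh (α * s * |x| + c) ^ e := by
    intro x
    rw [hφ x]
    have hp : 0 < Real.cosh (α * s * |x| + c) := Real.cosh_pos _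
    rw [Real.mul_rpow (by positivity) (by positivity)]
    congr 1
    rw [← Real.rpow_natCast (1 / Real.cosh (α * s * |x| + c)) 2,
      ← Real.rpow_mul (by positivity), one_div,
      Real.inv_rpow hp.le, ← Real.rpow_neg hp.le]
    congr 1
    rw [hedef]
    push_cast
    field_simp
  have hαs : (α * s) ^ 2 = α ^ 2 * ω := by rw [← hs2]; ring
  have hαs' : (-(α * s)) ^ 2 = α ^ 2 * ω := by rw [← hs2]; ring
  -- key algebraic identity at each point
  have key : ∀ b : ℝ, b ^ 2 = α ^ 2 * ω → ∀ u : ℝ,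
      -(A * (b * e) * ((Real.cosh (b*u+c) * b) * Real.cosh (b*u+c) ^ (e-1)
        + Real.sinh (b*u+c) * (Real.sinh (b*u+c) * b * (e-1) * Real.cosh (b*u+c) ^ (e-1-1))))
      + ω * (A * Real.cosh (b*u+c) ^ e)
      - |A * Real.cosh (b*u+c) ^ e| ^ (2*α) * (A * Real.cosh (b*u+c) ^ e) = 0 := by
    intro b hb u
    set p := Real.cosh (b*u+c) with hpdef
    set q := Real.sinh (b*u+c) with hqdef
    have hp : 0 < p := Real.cosh_pos _
    have hq : q ^ 2 = p ^ 2 - 1 := Real.sinh_sq _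
    have hr : 0 < p ^ e := Real.rpow_pos_of_pos hp _
    have habs : |A * p ^ e| = A * p ^ e := abs_of_pos (by positivity)
    have h1 : p ^ (e-1) = p ^ e / p := by rw [Real.rpow_sub hp, Real.rpow_one]
    have h2 : p ^ (e-1-1) = p ^ e / p / p := by
      rw [Real.rpow_sub hp, Real.rpow_sub hp, Real.rpow_one]
    have h3 : (A * p ^ e) ^ (2*α) = (α+1) * ω * (p^2)⁻¹ := by
      rw [Real.mul_rpow hA.le hr.le, hAdef, ← Real.rpow_mul (by positivity),
        ← Real.rpow_mul hp.le]
      rw [show (1 / (2*α)) * (2*α) = 1 by field_simp, Real.rpow_one]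
      rw [show e * (2*α) = -((2:ℕ):ℝ) by rw [hedef]; push_cast; field_simp]
      rw [Real.rpow_neg hp.le, Real.rpow_natCast]
    rw [habs, h1, h2, h3, hedef]
    exact alg α ω A p q (p ^ e) b hα.ne' hp.ne' hq hb
  constructor
  · intro x hx
    rcases hx.lt_or_gt with hneg | hpos
    · -- x < 0 : φ agrees with u ↦ A * cosh ((-(α*s))*u + c) ^ e near x
      have heq : φ =ᶠ[nhds x] (fun u : ℝ => A * Real.cosh ((-(α * s)) * u + c) ^ e) := by
        filter_upwards [isOpen_Iio.mem_nhds (show x ∈ Iio (0:ℝ) from hneg)] with y hy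
        rw [hφF y, abs_of_neg (mem_Iio.1 hy),
          show α * s * (-y) + c = -(α * s) * y + c by ring]
      have h2 := (heq.deriv).deriv_eq
      have hd1 : deriv (fun u : ℝ => A * Real.cosh ((-(α * s)) * u + c) ^ e)
          = (fun u : ℝ => A * (Real.sinh ((-(α * s))*u+c) * (-(α * s)) * e *
              Real.cosh ((-(α * s))*u+c) ^ (e-1))) :=
        funext fun u => (derivF A (-(α * s)) c e u).deriv
      rw [h2, hd1, (derivF' A (-(α * s)) c e x).deriv, hφF x, abs_of_neg hneg,
        show α * s * (-x) + c = -(α * s) * x + c by ring]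
      exact key (-(α * s)) hαs' x
    · have heq : φ =ᶠ[nhds x] (fun u : ℝ => A * Real.cosh ((α * s) * u + c) ^ e) := by
        filter_upwards [isOpen_Ioi.mem_nhds (show x ∈ Ioi (0:ℝ) from hpos)] with y hy
        rw [hφF y, abs_of_pos (mem_Ioi.1 hy)]
      have h2 := (heq.deriv).deriv_eq
      have hd1 : deriv (fun u : ℝ => A * Real.cosh ((α * s) * u + c) ^ e)
          = (fun u : ℝ => A * (Real.sinh ((α * s)*u+c) * (α * s) * e *
              Real.cosh ((α * s)*u+c) ^ (e-1))) :=
        funext fun u => (derivF A (α * s) c e u).deriv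
      rw [h2, hd1, (derivF' A (α * s) c e x).deriv, hφF x, abs_of_pos hpos]
      exact key (α * s) hαs x
  · -- the jump condition
    refine ⟨A * (Real.sinh ((α*s)*0+c) * (α*s) * e * Real.cosh ((α*s)*0+c) ^ (e-1)),
      A * (Real.sinh ((-(α*s))*0+c) * (-(α*s)) * e * Real.cosh ((-(α*s))*0+c) ^ (e-1)),
      ?_, ?_, ?_⟩
    · refine (derivF A (α*s) c e 0).hasDerivWithinAt.congr (fun y hy => ?_) ?_
      · rw [hφF y, abs_of_nonneg (mem_Ici.1 hy)]
      · rw [hφF 0]; norm_num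
    · refine (derivF A (-(α*s)) c e 0).hasDerivWithinAt.congr (fun y hy => ?_) ?_
      · rw [hφF y, abs_of_nonpos (mem_Iic.1 hy),
          show α * s * (-y) + c = -(α * s) * y + c by ring]
      · rw [hφF 0]; norm_num
    · have hc0 : 0 < Real.cosh c := Real.cosh_pos _
      have ht1 : Z / (2 * s) < 1 := by
        rw [div_lt_one (by positivity)]
        nlinarith [hs2]
      have ht0 : (-1:ℝ) < Z / (2 * s) := by
        have : 0 < Z / (2 * s) := by positivity
        linarith
      have htanh : Real.tanh c = Z / (2 * s) := tanh_artanh' ht0 ht1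
      have hsinh : Real.sinh c = Z / (2 * s) * Real.cosh c := by
        rw [Real.tanh_eq_sinh_div_cosh] at htanh
        rw [div_mul_eq_mul_div, eq_div_iff (by positivity : (2*s) ≠ 0)]
        field_simp at htanh
        linarith [htanh]
      have hcc : Real.cosh c ^ (e - 1) = Real.cosh c ^ e / Real.cosh c := by
        rw [Real.rpow_sub hc0, Real.rpow_one]
      rw [hφF 0]
      norm_num
      rw [hsinh, hcc, hedef]
      field_simp
      ring
end

section
/- (Well-definedness of the GFDN-BF step produces a nonzero iterate.) Suppose φⁿ ∈ H¹(ℝᵈ) satisfies I_ω(φⁿ) = 0 with φⁿ ≠ 0, ω > 0, τ > 0, and φ̃ⁿ⁺¹ ∈ H¹(ℝᵈ) satisfies (φ̃ⁿ⁺¹ − φⁿ)/τ = Δφ̃ⁿ⁺¹ − ωφ̃ⁿ⁺¹ − Vφⁿ + |φⁿ|^{2α}φⁿ in H⁻¹. Then φ̃ⁿ⁺¹ ≠ 0. -/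
/-- Well-definedness of the GFDN-BF step: the backward-forward Euler iterate
`φt` obtained from a nonzero `φn` on the Nehari manifold is nonzero.
Here `a` is the Dirichlet form ∫∇χ·∇v, `pL` the L² pairing, `w1` stands for
Vφⁿ and `w2` for |φⁿ|^{2α}φⁿ. -/
theorem stmt17 {H : Type*} [AddCommGroup H] [Module ℝ H]
    (a pL : H →ₗ[ℝ] H →ₗ[ℝ] ℝ)
    (ha : ∀ χ, 0 ≤ a χ χ) (hpL : ∀ χ, 0 ≤ pL χ χ)
    (hpL0 : ∀ χ, pL χ χ = 0 → χ = 0)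
    (ω τ : ℝ) (hω : 0 < ω) (hτ : 0 < τ)
    (φn φt w1 w2 : H) (hφn : φn ≠ 0)
    -- I_ω(φⁿ) = 0
    (hI : a φn φn + pL w1 φn + ω * pL φn φn - pL w2 φn = 0)
    -- weak (H⁻¹) form of (φ̃ⁿ⁺¹ - φⁿ)/τ = Δφ̃ⁿ⁺¹ - ωφ̃ⁿ⁺¹ - Vφⁿ + |φⁿ|^{2α}φⁿ
    (hscheme : ∀ v : H, pL (φt - φn) v / τ =
      -(a φt v) - ω * pL φt v - pL w1 v + pL w2 v) :
    φt ≠ 0 := by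
  intro h
  subst h
  have hs := hscheme φn
  simp only [map_zero, LinearMap.zero_apply, zero_sub, map_neg, LinearMap.neg_apply] at hs
  -- hs : -(pL φn φn) / τ = -0 - ω*0 - pL w1 φn + pL w2 φn (roughly)
  have hPn : pL φn φn = 0 := by
    have h1 := ha φn
    have h2 := hpL φn
    have hτ' := hτ
    have key : -(pL φn φn) / τ = a φn φn + ω * pL φn φn := by linarith
    rw [div_eq_iff (ne_of_gt hτ)] at key
    nlinarith [mul_nonneg (le_of_lt hτ) h1, mul_nonneg (le_of_lt hτ) (mul_nonneg (le_of_lt hω) h2)]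
  exact hφn (hpL0 φn hPn)
end
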